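/- In the Edge Model on a connected graph G with m edges and parameter α ∈ (0,1), define the potential φ̄_V(ξ) = (1/(2n))·Σ_{x,y∈V} (ξ_x − ξ_y)². Then for every t ≥ 0, E( φ̄_V(ξ(t)) ) ≤ ( 1 − (α(1−α)/m)·λ₂(L) )^t · φ̄_V(ξ(0)), where λ₂(L) is the second-smallest eigenvalue of the graph Laplacian L = D − A. -/

import Mathlib

open MeasureTheory ProbabilityTheory Finset

/-- A step of the Edge Model: a directed edge, i.e. an ordered pair of adjacent nodes. -/
abbrev EdgeStep (n : ℕ) := Fin n × Fin n

/-- A connected graph on at least two vertices has a directed edge. -/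
lemma exists_adj_pair {n : ℕ} (G : SimpleGraph (Fin n)) [DecidableRel G.Adj]
    (hconn : G.Connected) (hn : 1 < n) :
    (Finset.univ.filter fun p : EdgeStep n => G.Adj p.1 p.2).Nonempty := by
  obtain ⟨w⟩ := hconn.preconnected ⟨0, by omega⟩ ⟨1, hn⟩
  cases w with
  | @cons _ v _ h _ => exact ⟨(_, v), by simpa using h⟩

/-- Distribution of a single step of the Edge Model: a uniformly random directed edge. -/
noncomputable def edgeStepPMF {n : ℕ} (G : SimpleGraph (Fin n)) [DecidableRel G.Adj]
    (hconn : G.Connected) (hn : 1 < n) : PMF (EdgeStep n) :=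
  PMF.uniformOfFinset _ (exists_adj_pair G hconn hn)

/-- One update of the Edge Model: for the chosen directed edge `e = (u,v)`, node `u`
replaces its value by `α ξ_u + (1-α) ξ_v`. -/
noncomputable def edgeUpdate {n : ℕ} (α : ℝ) (e : EdgeStep n) (ξ : Fin n → ℝ) : Fin n → ℝ :=
  fun w => if w = e.1 then α * ξ w + (1 - α) * ξ e.2 else ξ w

/-- The trajectory of node values of the Edge Model, given the sequence of step choices. -/
noncomputable def edgeTraj {n : ℕ} (α : ℝ) (ξ0 : Fin n → ℝ) (ω : ℕ → EdgeStep n) :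
    ℕ → Fin n → ℝ
  | 0 => ξ0
  | t + 1 => edgeUpdate α (ω t) (edgeTraj α ξ0 ω t)

/-- Stationary distribution of the lazy random walk: `π u = d_u / (2m)`. -/
noncomputable def piRW {n : ℕ} (G : SimpleGraph (Fin n)) [DecidableRel G.Adj] (u : Fin n) : ℝ :=
  (G.degree u : ℝ) / (2 * (G.edgeFinset.card : ℝ))

/-- The potential `φ(ξ) = (1/2) Σ_{u,v} π_u π_v (ξ_u - ξ_v)²`. -/
noncomputable def phi {n : ℕ} (G : SimpleGraph (Fin n)) [DecidableRel G.Adj]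
    (ξ : Fin n → ℝ) : ℝ :=
  (1 / 2) * ∑ u, ∑ v, piRW G u * piRW G v * (ξ u - ξ v) ^ 2

/-- `lam` is the second-smallest eigenvalue of the graph Laplacian `L = D - A`:
it is the smallest eigenvalue attained on the space of vectors orthogonal to `1`. -/
def IsSecondEigenvalueL {n : ℕ} (G : SimpleGraph (Fin n)) [DecidableRel G.Adj]
    (lam : ℝ) : Prop :=
  (∃ f : Fin n → ℝ, f ≠ 0 ∧ (G.lapMatrix ℝ).mulVec f = lam • f ∧ ∑ x, f x = 0) ∧
  ∀ lam' : ℝ,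
    (∃ f : Fin n → ℝ, f ≠ 0 ∧ (G.lapMatrix ℝ).mulVec f = lam' • f ∧ ∑ x, f x = 0) →
      lam ≤ lam'
/-- The potential `φ̄_V(ξ) = (1/(2n)) Σ_{x,y} (ξ_x - ξ_y)²`. -/
noncomputable def phibar {n : ℕ} (ξ : Fin n → ℝ) : ℝ :=
  (1 / (2 * (n : ℝ))) * ∑ x, ∑ y, (ξ x - ξ y) ^ 2

/-!
Averaging the updates along `(u, v)` and `(v, u)` shows that one random step lowers `φ̄` in
expectation by at least `α(1-α)/m · ξᵀLξ`. The quadratic form `ξᵀLξ` does not change when the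
mean is subtracted from `ξ`, and `φ̄(ξ)` is the squared norm of the centred vector, which is
orthogonal to `1`; on `1ᗮ` the Laplacian restricts to a symmetric operator all of whose
eigenvalues are at least `λ₂`, so `ξᵀLξ ≥ λ₂ φ̄(ξ)`. The state after `t` steps is a function of
the first `t` choices, which are independent of the next one, so the one-step bound iterates.
-/

open scoped Matrix InnerProductSpace

namespace LinearMap.IsSymmetric

variable {E : Type*} [NormedAddCommGroup E] [InnerProductSpace ℝ E] [FiniteDimensional ℝ E]
  {T : E →ₗ[ℝ] E}

theorem mul_norm_sq_le_inner_map_self (hT : T.IsSymmetric) {c : ℝ}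
    (hc : ∀ μ, Module.End.HasEigenvalue T μ → c ≤ μ) (x : E) :
    c * ‖x‖ ^ 2 ≤ ⟪T x, x⟫_ℝ := by
  set b := hT.eigenvectorBasis rfl
  have hnorm : ‖x‖ ^ 2 = ∑ i, b.repr x i ^ 2 := by
    rw [← b.repr.norm_map, EuclideanSpace.norm_sq_eq]
    simp
  have hinner : ⟪T x, x⟫_ℝ = ∑ i, hT.eigenvalues rfl i * b.repr x i ^ 2 := by
    rw [← b.repr.inner_map_map, PiLp.inner_apply]
    simp only [b, hT.eigenvectorBasis_apply_self_apply, RCLike.inner_apply, conj_trivial,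
      RCLike.ofReal_real_eq_id, id_eq]
    exact Finset.sum_congr rfl fun i _ => by ring
  rw [hnorm, hinner, Finset.mul_sum]
  exact Finset.sum_le_sum fun i _ =>
    mul_le_mul_of_nonneg_right (hc _ (hT.hasEigenvalue_eigenvalues rfl i)) (sq_nonneg _)

theorem mul_norm_sq_le_inner_map_self_of_mem (hT : T.IsSymmetric) {W : Submodule ℝ E}
    (hW : ∀ x ∈ W, T x ∈ W) {c : ℝ} (hc : ∀ μ, ∀ v ∈ W, v ≠ 0 → T v = μ • v → c ≤ μ)
    {x : E} (hx : x ∈ W) : c * ‖x‖ ^ 2 ≤ ⟪T x, x⟫_ℝ := by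
  refine (hT.restrict_invariant hW).mul_norm_sq_le_inner_map_self (fun μ hμ => ?_) ⟨x, hx⟩
  obtain ⟨v, hv⟩ := hμ.exists_hasEigenvector
  exact hc μ v v.2 (by simpa using hv.2) (congrArg Subtype.val hv.apply_eq_smul)

end LinearMap.IsSymmetric

theorem PMF.integral_uniformOfFinset {β : Type*} [Fintype β] [MeasurableSpace β]
    [MeasurableSingletonClass β] {s : Finset β} (hs : s.Nonempty) (f : β → ℝ) :
    ∫ b, f b ∂(PMF.uniformOfFinset s hs).toMeasure = (∑ b ∈ s, f b) / #s := by
  rw [PMF.integral_eq_sum]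
  simp [PMF.uniformOfFinset_apply, apply_ite ENNReal.toReal, ite_mul, Finset.sum_ite_mem,
    div_eq_inv_mul, Finset.mul_sum]

section Probability

variable {Ω : Type*} [MeasurableSpace Ω] {μ : Measure Ω}

theorem ProbabilityTheory.IndepFun.integral_comp_prodMk [IsFiniteMeasure μ]
    {β γ : Type*} [MeasurableSpace β] [MeasurableSpace γ] {X : Ω → β} {Y : Ω → γ}
    (hXY : IndepFun X Y μ) (hX : AEMeasurable X μ) (hY : AEMeasurable Y μ) {g : β × γ → ℝ}
    (hg : Integrable g ((μ.map X).prod (μ.map Y))) :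
    ∫ ω, g (X ω, Y ω) ∂μ = ∫ x, ∫ y, g (x, y) ∂μ.map Y ∂μ.map X := by
  have hmap := (indepFun_iff_map_prod_eq_prod_map_map hX hY).1 hXY
  rw [← integral_prod g hg, ← hmap, integral_map (hX.prodMk hY) (hmap ▸ hg.aestronglyMeasurable)]

theorem ProbabilityTheory.iIndepFun.indepFun_fin_prefix {β : Type*} [MeasurableSpace β]
    {X : ℕ → Ω → β} (hX : iIndepFun X μ) (hmeas : ∀ t, Measurable (X t)) (t : ℕ) :
    IndepFun (fun ω (i : Fin t) => X i ω) (X t) μ := by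
  have hφ : Measurable fun (f : Finset.range t → β) (i : Fin t) =>
      f ⟨i, Finset.mem_range.2 i.isLt⟩ :=
    measurable_pi_lambda _ fun _ => measurable_pi_apply _
  have hψ : Measurable fun f : ({t} : Finset ℕ) → β => f ⟨t, Finset.mem_singleton_self t⟩ :=
    measurable_pi_apply _
  exact (hX.indepFun_finset (Finset.range t) {t} (by simp) hmeas).comp hφ hψ

end Probability

section DirectedEdges

variable {n : ℕ} (G : SimpleGraph (Fin n)) [DecidableRel G.Adj]

def dirEdges : Finset (EdgeStep n) :=
  Finset.univ.filter fun p => G.Adj p.1 p.2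

theorem sum_dirEdges (f : EdgeStep n → ℝ) :
    ∑ e ∈ dirEdges G, f e = ∑ i, ∑ j, if G.Adj i j then f (i, j) else 0 := by
  rw [dirEdges, Finset.sum_filter, Fintype.sum_prod_type]

theorem sum_dirEdges_swap (f : EdgeStep n → ℝ) :
    ∑ e ∈ dirEdges G, f e.swap = ∑ e ∈ dirEdges G, f e :=
  Finset.sum_nbij' Prod.swap Prod.swap (by simp [dirEdges, G.adj_comm])
    (by simp [dirEdges, G.adj_comm]) (by simp) (by simp) (by simp)

theorem card_dirEdges : #(dirEdges G) = 2 * #G.edgeFinset := by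
  rw [← G.sum_degrees_eq_twice_card_edges, dirEdges, Finset.card_filter, Fintype.sum_prod_type]
  refine Finset.sum_congr rfl fun u _ => ?_
  rw [← G.card_neighborFinset_eq_degree, G.neighborFinset_eq_filter, Finset.card_filter]

theorem sum_dirEdges_sq_sub (ξ : Fin n → ℝ) :
    ∑ e ∈ dirEdges G, (ξ e.1 - ξ e.2) ^ 2 = 2 * (ξ ⬝ᵥ (G.lapMatrix ℝ *ᵥ ξ)) := by
  rw [sum_dirEdges, ← Matrix.toLinearMap₂'_apply', G.lapMatrix_toLinearMap₂' ℝ]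
  ring

theorem SimpleGraph.dotProduct_lapMatrix_mulVec_sub_const (ξ : Fin n → ℝ) (a : ℝ) :
    (fun x => ξ x - a) ⬝ᵥ (G.lapMatrix ℝ *ᵥ fun x => ξ x - a) = ξ ⬝ᵥ (G.lapMatrix ℝ *ᵥ ξ) := by
  simp only [← Matrix.toLinearMap₂'_apply', G.lapMatrix_toLinearMap₂' ℝ, sub_sub_sub_cancel_right]

end DirectedEdges

section Laplacian

variable {n : ℕ} {G : SimpleGraph (Fin n)} [DecidableRel G.Adj]

open WithLp in
theorem IsSecondEigenvalueL.mul_sum_sq_le {lam2 : ℝ} (hlam : IsSecondEigenvalueL G lam2)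
    {f : Fin n → ℝ} (hf : ∑ x, f x = 0) :
    lam2 * ∑ x, f x ^ 2 ≤ f ⬝ᵥ (G.lapMatrix ℝ *ᵥ f) := by
  set T := Matrix.toEuclideanLin (G.lapMatrix ℝ)
  set one : EuclideanSpace ℝ (Fin n) := toLp 2 fun _ => 1
  have hT : T.IsSymmetric := Matrix.isSymmetric_toEuclideanLin_iff.2 (G.isHermitian_lapMatrix ℝ)
  have hT_one : T one = 0 := by
    simp [T, one, Matrix.toLpLin_apply, G.lapMatrix_mulVec_const_eq_zero]
  have hmem (x : EuclideanSpace ℝ (Fin n)) : x ∈ (ℝ ∙ one)ᗮ ↔ ∑ i, x i = 0 := by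
    simp [Submodule.mem_orthogonal_singleton_iff_inner_right, one, PiLp.inner_apply]
  have key := hT.mul_norm_sq_le_inner_map_self_of_mem (W := (ℝ ∙ one)ᗮ) (c := lam2)
    (fun x hx => by
      rw [Submodule.mem_orthogonal_singleton_iff_inner_right, ← hT, hT_one, inner_zero_left])
    (fun μ v hv hv0 hTv => hlam.2 μ ⟨ofLp v, by simpa using hv0,
      by simpa [T, Matrix.toLpLin_apply] using congrArg ofLp hTv, (hmem v).1 hv⟩)
    ((hmem (toLp 2 f)).2 hf)
  simpa [EuclideanSpace.norm_sq_eq, PiLp.inner_apply, T, Matrix.toLpLin_apply, dotProduct,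
    mul_comm] using key

end Laplacian

section Potential

variable {n : ℕ}

theorem phibar_nonneg (ξ : Fin n → ℝ) : 0 ≤ phibar ξ := by
  unfold phibar
  positivity

theorem phibar_eq_sum_sq_sub (ξ : Fin n → ℝ) :
    phibar ξ = ∑ x, ξ x ^ 2 - (∑ x, ξ x) ^ 2 / n := by
  rcases n.eq_zero_or_pos with rfl | hn
  · simp [phibar]
  have h (x : Fin n) : ∑ y, (ξ x - ξ y) ^ 2 = n * ξ x ^ 2 - 2 * ξ x * ∑ y, ξ y + ∑ y, ξ y ^ 2 := by
    simp only [sub_sq, Finset.sum_add_distrib, Finset.sum_sub_distrib, Finset.sum_const,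
      Finset.card_univ, Fintype.card_fin, nsmul_eq_mul, Finset.mul_sum]
  simp only [phibar, h, Finset.sum_add_distrib, Finset.sum_sub_distrib, ← Finset.sum_mul,
    ← Finset.mul_sum, Finset.sum_const, Finset.card_univ, Fintype.card_fin, nsmul_eq_mul]
  field_simp
  ring

theorem phibar_eq_sum_sq_sub_mean (ξ : Fin n → ℝ) :
    phibar ξ = ∑ x, (ξ x - (∑ y, ξ y) / n) ^ 2 := by
  rcases n.eq_zero_or_pos with rfl | hn
  · simp [phibar]
  simp only [phibar_eq_sum_sq_sub, sub_sq, Finset.sum_add_distrib, Finset.sum_sub_distrib,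
    ← Finset.sum_mul, Finset.sum_const, Finset.card_univ, Fintype.card_fin, nsmul_eq_mul]
  field_simp
  rw [← Finset.mul_sum]
  ring

theorem phibar_update (ξ : Fin n → ℝ) (u : Fin n) (a : ℝ) :
    phibar (Function.update ξ u a) =
      phibar ξ + (a ^ 2 - ξ u ^ 2) - ((∑ x, ξ x - ξ u + a) ^ 2 - (∑ x, ξ x) ^ 2) / n := by
  have hsum (g : Fin n → ℝ) (b : ℝ) : ∑ x, Function.update g u b x = ∑ x, g x - g u + b := by
    rw [Finset.sum_update_of_mem (Finset.mem_univ u), Finset.sdiff_singleton_eq_erase,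
      Finset.sum_erase_eq_sub (Finset.mem_univ u)]
    ring
  have hsq : ∑ x, Function.update ξ u a x ^ 2 = ∑ x, ξ x ^ 2 - ξ u ^ 2 + a ^ 2 := by
    simp_rw [Function.apply_update (fun _ y => y ^ 2) ξ u a]
    exact hsum _ _
  rw [phibar_eq_sum_sq_sub, phibar_eq_sum_sq_sub, hsum, hsq]
  ring

theorem edgeUpdate_eq_update (α : ℝ) (e : EdgeStep n) (ξ : Fin n → ℝ) :
    edgeUpdate α e ξ = Function.update ξ e.1 (α * ξ e.1 + (1 - α) * ξ e.2) := by
  ext w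
  by_cases h : w = e.1 <;> simp [edgeUpdate, h]

theorem phibar_edgeUpdate_add_swap_le (α : ℝ) (e : EdgeStep n) (ξ : Fin n → ℝ) :
    phibar (edgeUpdate α e ξ) + phibar (edgeUpdate α e.swap ξ) ≤
      2 * phibar ξ - 2 * (α * (1 - α)) * (ξ e.1 - ξ e.2) ^ 2 := by
  have hδ : 0 ≤ ((1 - α) * (ξ e.1 - ξ e.2)) ^ 2 / n := by positivity
  rw [edgeUpdate_eq_update, edgeUpdate_eq_update, phibar_update, phibar_update]
  simp only [Prod.fst_swap, Prod.snd_swap]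
  linear_combination 2 * hδ

theorem exists_phibar_pos (hn : 1 < n) : ∃ ξ : Fin n → ℝ, 0 < phibar ξ := by
  refine ⟨Pi.single ⟨0, by omega⟩ 1, ?_⟩
  have : (1 : ℝ) < n := by exact_mod_cast hn
  rw [phibar_eq_sum_sq_sub]
  simp only [sq, Pi.single_apply, mul_ite, mul_one, mul_zero, Finset.sum_ite_eq',
    Finset.mem_univ, if_true]
  exact sub_pos.2 ((div_lt_one (by linarith)).2 (by linarith))

end Potential

section StepBound

variable {n : ℕ} {G : SimpleGraph (Fin n)} [DecidableRel G.Adj]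

theorem IsSecondEigenvalueL.mul_phibar_le {lam2 : ℝ} (hlam : IsSecondEigenvalueL G lam2)
    (ξ : Fin n → ℝ) : lam2 * phibar ξ ≤ ξ ⬝ᵥ (G.lapMatrix ℝ *ᵥ ξ) := by
  rcases n.eq_zero_or_pos with rfl | hn
  · simp [phibar, dotProduct]
  have hcentered : ∑ x, (ξ x - (∑ y, ξ y) / n) = 0 := by
    rw [Finset.sum_sub_distrib, Finset.sum_const, Finset.card_univ, Fintype.card_fin, nsmul_eq_mul]
    field_simp
    ring
  rw [phibar_eq_sum_sq_sub_mean, ← G.dotProduct_lapMatrix_mulVec_sub_const ξ ((∑ y, ξ y) / n)]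
  exact hlam.mul_sum_sq_le hcentered

variable (G)

theorem sum_phibar_edgeUpdate_le (α : ℝ) (ξ : Fin n → ℝ) :
    ∑ e ∈ dirEdges G, phibar (edgeUpdate α e ξ) ≤
      2 * #G.edgeFinset * phibar ξ - 2 * (α * (1 - α)) * (ξ ⬝ᵥ (G.lapMatrix ℝ *ᵥ ξ)) := by
  have h := Finset.sum_le_sum fun e (_ : e ∈ dirEdges G) => phibar_edgeUpdate_add_swap_le α e ξ
  rw [Finset.sum_add_distrib, sum_dirEdges_swap G fun e => phibar (edgeUpdate α e ξ),
    Finset.sum_sub_distrib, Finset.sum_const, ← Finset.mul_sum, sum_dirEdges_sq_sub,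
    card_dirEdges, nsmul_eq_mul] at h
  push_cast at h
  linarith

end StepBound

theorem integral_phibar_edgeUpdate_le {n : ℕ} (hn : 1 < n) (G : SimpleGraph (Fin n))
    [DecidableRel G.Adj] (hconn : G.Connected) {α : ℝ} (hα : α ∈ Set.Ioo (0 : ℝ) 1)
    {lam2 : ℝ} (hlam : IsSecondEigenvalueL G lam2) (ξ : Fin n → ℝ) :
    ∫ e, phibar (edgeUpdate α e ξ) ∂(edgeStepPMF G hconn hn).toMeasure ≤
      (1 - α * (1 - α) / #G.edgeFinset * lam2) * phibar ξ := by
  have hcard : (#(dirEdges G) : ℝ) = 2 * #G.edgeFinset := by exact_mod_cast card_dirEdges G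
  have hm : (0 : ℝ) < #G.edgeFinset := by
    have : (0 : ℝ) < #(dirEdges G) := by exact_mod_cast (exists_adj_pair G hconn hn).card_pos
    linarith
  have hαα : 0 ≤ α * (1 - α) := mul_nonneg hα.1.le (sub_nonneg.2 hα.2.le)
  rw [edgeStepPMF, PMF.integral_uniformOfFinset]
  change (∑ e ∈ dirEdges G, _) / (#(dirEdges G) : ℝ) ≤ _
  rw [hcard, div_le_iff₀ (by positivity)]
  calc _ ≤ 2 * #G.edgeFinset * phibar ξ - 2 * (α * (1 - α)) * (ξ ⬝ᵥ (G.lapMatrix ℝ *ᵥ ξ)) :=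
        sum_phibar_edgeUpdate_le G α ξ
    _ ≤ 2 * #G.edgeFinset * phibar ξ - 2 * (α * (1 - α)) * (lam2 * phibar ξ) := by
        gcongr
        exact hlam.mul_phibar_le ξ
    _ = _ := by field_simp

theorem exists_edgeTraj_eq_comp {n : ℕ} (α : ℝ) (ξ0 : Fin n → ℝ) (t : ℕ) :
    ∃ F : (Fin t → EdgeStep n) → Fin n → ℝ, ∀ ω, edgeTraj α ξ0 ω t = F fun i => ω i := by
  induction t with
  | zero => exact ⟨fun _ => ξ0, fun _ => rfl⟩
  | succ t ih =>
    obtain ⟨F, hF⟩ := ih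
    exact ⟨fun s => edgeUpdate α (s (Fin.last t)) (F (Fin.init s)), fun ω =>
      congrArg (edgeUpdate α (ω t)) (hF ω)⟩

theorem integral_comp_edgeTraj_le {Ω : Type*} [MeasurableSpace Ω] {μ : Measure Ω} {n : ℕ}
    (α : ℝ) (ξ0 : Fin n → ℝ) {steps : ℕ → Ω → EdgeStep n} (hmeas : ∀ t, Measurable (steps t))
    (hiid : iIndepFun steps μ) {ν : Measure (EdgeStep n)} (hdist : ∀ t, μ.map (steps t) = ν)
    {Φ : (Fin n → ℝ) → ℝ} {c : ℝ} (hc : 0 ≤ c) (hΦ : ∀ ξ, ∫ e, Φ (edgeUpdate α e ξ) ∂ν ≤ c * Φ ξ) (t : ℕ) :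
    ∫ ω, Φ (edgeTraj α ξ0 (fun s => steps s ω) t) ∂μ ≤ c ^ t * Φ ξ0 := by
  have := hiid.isProbabilityMeasure
  induction t with
  | zero => simp [edgeTraj]
  | succ t ih =>
    obtain ⟨F, hF⟩ := exists_edgeTraj_eq_comp α ξ0 t
    set X := fun ω (i : Fin t) => steps i ω
    have hX : Measurable X := measurable_pi_lambda _ fun i => hmeas i
    calc ∫ ω, Φ (edgeTraj α ξ0 (fun s => steps s ω) (t + 1)) ∂μ
        = ∫ ω, Φ (edgeUpdate α (steps t ω) (F (X ω))) ∂μ := by simp only [edgeTraj, hF, X]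
      _ = ∫ s, ∫ e, Φ (edgeUpdate α e (F s)) ∂ν ∂μ.map X := by
        rw [← hdist t]
        exact (hiid.indepFun_fin_prefix hmeas t).integral_comp_prodMk
          (g := fun p => Φ (edgeUpdate α p.2 (F p.1))) hX.aemeasurable (hmeas t).aemeasurable
          .of_finite
      _ ≤ ∫ s, c * Φ (F s) ∂μ.map X := integral_mono .of_finite .of_finite fun s => hΦ (F s)
      _ = c * ∫ ω, Φ (edgeTraj α ξ0 (fun s => steps s ω) t) ∂μ := by
        rw [integral_const_mul,
          integral_map hX.aemeasurable (measurable_of_countable _).aestronglyMeasurable]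
        simp only [hF, X]
      _ ≤ c ^ (t + 1) * Φ ξ0 := by
        rw [pow_succ', mul_assoc]
        exact mul_le_mul_of_nonneg_left ih hc

theorem edge_model_potential_drop_general {n : ℕ} (hn : 1 < n)
    (G : SimpleGraph (Fin n)) [DecidableRel G.Adj] (hconn : G.Connected)
    (α : ℝ) (hα : α ∈ Set.Ioo (0 : ℝ) 1)
    (lam2 : ℝ) (hlam : IsSecondEigenvalueL G lam2)
    (ξ0 : Fin n → ℝ)
    (Ω : Type) (mΩ : MeasurableSpace Ω) (Pr : Measure Ω)
    (steps : ℕ → Ω → EdgeStep n) (hmeas : ∀ t, Measurable (steps t))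
    (hiid : iIndepFun steps Pr)
    (hdist : ∀ t, Measure.map (steps t) Pr = (edgeStepPMF G hconn hn).toMeasure) :
    ∀ t : ℕ,
      ∫ ω, phibar (edgeTraj α ξ0 (fun s => steps s ω) t) ∂Pr ≤
        (1 - α * (1 - α) / (G.edgeFinset.card : ℝ) * lam2) ^ t * phibar ξ0 := by
  have hstep := integral_phibar_edgeUpdate_le hn G hconn hα hlam
  have hrate : 0 ≤ 1 - α * (1 - α) / (G.edgeFinset.card : ℝ) * lam2 := by
    obtain ⟨ξ, hξ⟩ := exists_phibar_pos hn
    refine le_of_mul_le_mul_right ?_ hξ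
    rw [zero_mul]
    exact (integral_nonneg fun _ => phibar_nonneg _).trans (hstep ξ)
  exact integral_comp_edgeTraj_le α ξ0 hmeas hiid hdist hrate hstep

/-- **Proposition 5(ii) (potential drop in the Edge Model).**
In the Edge Model on a connected graph `G` with `m` edges and parameter `α ∈ (0,1)`,
for every `t ≥ 0`,
`E( φ̄_V(ξ(t)) ) ≤ ( 1 - (α(1-α)/m)·λ₂(L) )^t · φ̄_V(ξ(0))`,
where `λ₂(L)` is the second-smallest eigenvalue of the Laplacian `L = D - A`. -/
theorem edge_model_potential_drop {n : ℕ} (hn : 1 < n)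
    (G : SimpleGraph (Fin n)) [DecidableRel G.Adj] (hconn : G.Connected)
    (α : ℝ) (hα : α ∈ Set.Ioo (0 : ℝ) 1)
    (lam2 : ℝ) (hlam : IsSecondEigenvalueL G lam2)
    (ξ0 : Fin n → ℝ)
    (Ω : Type) (mΩ : MeasurableSpace Ω) (Pr : Measure Ω) (hPr : IsProbabilityMeasure Pr)
    (steps : ℕ → Ω → EdgeStep n) (hmeas : ∀ t, Measurable (steps t))
    (hiid : iIndepFun steps Pr)
    (hdist : ∀ t, Measure.map (steps t) Pr = (edgeStepPMF G hconn hn).toMeasure) :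
    ∀ t : ℕ,
      ∫ ω, phibar (edgeTraj α ξ0 (fun s => steps s ω) t) ∂Pr ≤
        (1 - α * (1 - α) / (G.edgeFinset.card : ℝ) * lam2) ^ t * phibar ξ0 :=
  edge_model_potential_drop_general hn G hconn α hα lam2 hlam ξ0 Ω mΩ Pr steps hmeas hiid hdist
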